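/- For r ≡ 4 (mod 8), the centralizer of spin(r) = span{e_i e_j : 1 ≤ i < j ≤ r} in the even Clifford algebra Cl_{r+3}^0 is the 8-dimensional span of (1/2)(1 ± e_1···e_r), (1/2)(1 ± e_1···e_r)e_{r+1}e_{r+2}, (1/2)(1 ± e_1···e_r)e_{r+1}e_{r+3}, and (1/2)(1 ± e_1···e_r)e_{r+2}e_{r+3}; this algebra is isomorphic to ℍ ⊕ ℍ. -/

import Mathlib

/-!
The sign flips `e_i ↦ -e_i` (`i ∈ A`) are algebra automorphisms of `Cl_n` acting diagonally on
the monomials: `e_T ↦ (-1)^|T ∩ A| e_T`. The grade involution is the flip of all generators and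
conjugation by `e_i e_j` is the flip of `{i, j}`, so the centralizer of `spin(r)` in `Cl⁰_{r+3}`
is the joint invariant space of these flips, spanned by the `e_T` with `|T|` even and
`|T ∩ {i, j}|` even for all `i < j ≤ r`: `T` contains all of `1, …, r` or none of them, plus an
even subset of `{r+1, r+2, r+3}`. These are `1`, `ω`, the three products `e_i e_j` with
`i, j > r` and their products with `ω`. For `r ≡ 4 (mod 8)` we have `ω² = 1` and `ω` is central
there, so `(1 ± ω)/2` are complementary idempotents; the three `e_i e_j` satisfy the quaternion
relations, and `(x, y) ↦ (1 + ω)/2 · φ x + (1 - ω)/2 · φ y` embeds `ℍ × ℍ` onto the span.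
-/

/-- The negative definite quadratic form on `ℝⁿ`. -/
noncomputable def Qneg (n : ℕ) : QuadraticForm ℝ (Fin n → ℝ) :=
  QuadraticMap.weightedSumSquares ℝ (fun _ : Fin n => (-1 : ℝ))

/-- The Clifford algebra `Cl_n` with `e_j e_k + e_k e_j = -2 δ_{jk}`. -/
noncomputable abbrev Cl (n : ℕ) := CliffordAlgebra (Qneg n)

/-- The standard generators `e_i` of `Cl_n`. -/
noncomputable def gen (n : ℕ) (i : Fin n) : Cl n :=
  CliffordAlgebra.ι (Qneg n) (Pi.single i 1)

/-- For an index set `I = {i₁ < ⋯ < i_s}`, the basis element `e_I = e_{i₁} ⋯ e_{i_s}`. -/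
noncomputable def eProd (n : ℕ) (I : Finset (Fin n)) : Cl n :=
  ((I.sort (· ≤ ·)).map (gen n)).prod

section SignFlip

open CliffordAlgebra Finset

variable {n : ℕ}

lemma Qneg_single (i : Fin n) : Qneg n (Pi.single i 1) = -1 := by
  simp [Qneg, QuadraticMap.weightedSumSquares_apply, Pi.single_apply]

lemma polar_Qneg_single {i j : Fin n} (h : i ≠ j) :
    QuadraticMap.polar (Qneg n) (Pi.single i 1) (Pi.single j 1) = 0 := by
  simp [QuadraticMap.polar, Qneg, QuadraticMap.weightedSumSquares_apply, Pi.single_apply,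
    Finset.sum_add_distrib, mul_add, h, h.symm]

lemma gen_mul_self (i : Fin n) : gen n i * gen n i = -1 := by
  rw [gen, ι_sq_scalar, Qneg_single, map_neg, map_one]

lemma gen_mul_gen_of_ne {i j : Fin n} (h : i ≠ j) :
    gen n i * gen n j = -(gen n j * gen n i) := by
  refine eq_neg_of_add_eq_zero_left ?_
  rw [gen, gen, ι_mul_ι_add_swap, polar_Qneg_single h, map_zero]

lemma ι_eq_sum_gen (v : Fin n → ℝ) : ι (Qneg n) v = ∑ i, v i • gen n i := by
  conv_lhs => rw [← Finset.univ_sum_single v]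
  simp only [map_sum, gen, ← map_smul, ← Pi.single_smul, smul_eq_mul, mul_one]

def signFlipIsometry (A : Finset (Fin n)) : Qneg n →qᵢ Qneg n where
  toFun v i := if i ∈ A then -v i else v i
  map_add' v w := by ext i; by_cases h : i ∈ A <;> simp [h, add_comm]
  map_smul' c v := by ext i; by_cases h : i ∈ A <;> simp [h]
  map_app' v := by
    simp only [Qneg, QuadraticMap.weightedSumSquares_apply]
    refine Finset.sum_congr rfl fun i _ => ?_
    split_ifs <;> ring

@[simp]
lemma signFlipIsometry_apply (A : Finset (Fin n)) (v : Fin n → ℝ) (i : Fin n) :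
    signFlipIsometry A v i = if i ∈ A then -v i else v i := rfl

noncomputable def signFlip (A : Finset (Fin n)) : Cl n →ₐ[ℝ] Cl n :=
  CliffordAlgebra.map (signFlipIsometry A)

lemma signFlip_gen (A : Finset (Fin n)) (i : Fin n) :
    signFlip A (gen n i) = if i ∈ A then -gen n i else gen n i := by
  have : signFlipIsometry A (Pi.single i 1) = (if i ∈ A then -1 else 1 : ℝ) • Pi.single i 1 := by
    ext k
    by_cases hk : k = i
    · subst hk; by_cases h : k ∈ A <;> simp [h]
    · simp [hk]
  rw [signFlip, gen, map_apply_ι, this, map_smul]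
  split_ifs <;> simp

lemma signFlip_univ : signFlip (univ : Finset (Fin n)) = involute := by
  refine CliffordAlgebra.hom_ext (LinearMap.ext fun v => ?_)
  simp only [LinearMap.comp_apply, AlgHom.toLinearMap_apply]
  rw [involute_ι, ι_eq_sum_gen]
  simp only [map_sum, map_smul, signFlip_gen, mem_univ, if_true, smul_neg, sum_neg_distrib]

lemma eProd_empty : eProd n ∅ = 1 := by
  simp [eProd]

lemma eProd_insert_of_lt {a : Fin n} {T : Finset (Fin n)} (h : ∀ b ∈ T, a < b) :
    eProd n (insert a T) = gen n a * eProd n T := by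
  rw [eProd, sort_insert _ (fun b hb => (h b hb).le) fun ha => (h a ha).false]
  simp [eProd]

lemma eProd_singleton (i : Fin n) : eProd n {i} = gen n i := by
  rw [← insert_empty, eProd_insert_of_lt (by simp), eProd_empty, mul_one]

lemma eProd_pair {i j : Fin n} (h : i < j) : eProd n {i, j} = gen n i * gen n j := by
  rw [eProd_insert_of_lt (by simpa), eProd_singleton]

lemma eProd_union_of_lt {S T : Finset (Fin n)} (h : ∀ x ∈ S, ∀ y ∈ T, x < y) :
    eProd n (S ∪ T) = eProd n S * eProd n T := by
  induction S using Finset.induction_on_min with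
  | empty => rw [empty_union, eProd_empty, one_mul]
  | insert a S ha ih =>
    have hlt : ∀ b ∈ S ∪ T, a < b := by
      simp only [mem_union]
      rintro b (hb | hb)
      exacts [ha b hb, h a (mem_insert_self a S) b hb]
    rw [insert_union, eProd_insert_of_lt hlt, eProd_insert_of_lt ha, mul_assoc,
      ih fun x hx => h x (mem_insert_of_mem hx)]

lemma signFlip_eProd (A T : Finset (Fin n)) :
    signFlip A (eProd n T) = (-1 : ℝ) ^ #(T ∩ A) • eProd n T := by
  induction T using Finset.induction_on_min with
  | empty => simp [eProd_empty]
  | insert a T ha ih =>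
    have haT : a ∉ T := fun h => (ha a h).false
    rw [eProd_insert_of_lt ha, map_mul, ih, signFlip_gen, mul_smul_comm]
    by_cases haA : a ∈ A
    · rw [if_pos haA, insert_inter_of_mem haA,
        card_insert_of_notMem (fun h => haT (mem_inter.1 h).1), pow_succ, mul_neg_one, neg_smul,
        neg_mul, smul_neg]
    · rw [if_neg haA, insert_inter_of_notMem haA]

lemma eProd_mul_gen_of_notMem {a : Fin n} {T : Finset (Fin n)} (h : a ∉ T) :
    eProd n T * gen n a = (-1 : ℝ) ^ #T • (gen n a * eProd n T) := by
  induction T using Finset.induction_on_min with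
  | empty => simp [eProd_empty]
  | insert b T hb ih =>
    have hbT : b ∉ T := fun h => (hb b h).false
    have hba : b ≠ a := fun hba => h (hba ▸ mem_insert_self b T)
    rw [eProd_insert_of_lt hb, mul_assoc, ih fun h' => h (mem_insert_of_mem h'),
      card_insert_of_notMem hbT, mul_smul_comm, ← mul_assoc, gen_mul_gen_of_ne hba, pow_succ,
      mul_neg_one, neg_smul, neg_mul, mul_assoc, smul_neg]

lemma eProd_mul_self (T : Finset (Fin n)) :
    eProd n T * eProd n T = (-1 : ℝ) ^ (#T + 1).choose 2 • 1 := by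
  induction T using Finset.induction_on_min with
  | empty => simp [eProd_empty]
  | insert a T ha ih =>
    have haT : a ∉ T := fun h => (ha a h).false
    calc eProd n (insert a T) * eProd n (insert a T)
        = gen n a * (eProd n T * gen n a) * eProd n T := by
          rw [eProd_insert_of_lt ha]; noncomm_ring
      _ = (-1 : ℝ) ^ #T • ((gen n a * gen n a) * (eProd n T * eProd n T)) := by
          rw [eProd_mul_gen_of_notMem haT, mul_smul_comm, smul_mul_assoc]; noncomm_ring
      _ = (-1 : ℝ) ^ (#(insert a T) + 1).choose 2 • 1 := by
          rw [gen_mul_self, ih, card_insert_of_notMem haT, Nat.choose_succ_succ (#T + 1),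
            Nat.choose_one_right, pow_add, mul_smul, neg_one_mul, smul_neg, pow_succ, mul_neg_one,
            neg_smul]

lemma exists_gen_mul_eProd (i : Fin n) (T : Finset (Fin n)) :
    ∃ (s : ℝ) (U : Finset (Fin n)), U ⊆ insert i T ∧ gen n i * eProd n T = s • eProd n U := by
  induction T using Finset.induction_on_min with
  | empty => exact ⟨1, {i}, subset_rfl, by rw [eProd_empty, eProd_singleton, one_smul, mul_one]⟩
  | insert a T ha ih =>
    rcases lt_trichotomy i a with hia | rfl | hai
    · have hi : ∀ b ∈ insert a T, i < b := by
        simpa [hia] using fun b hb => hia.trans (ha b hb)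
      exact ⟨1, insert i (insert a T), subset_rfl, by rw [eProd_insert_of_lt hi, one_smul]⟩
    · refine ⟨-1, T, fun b hb => mem_insert_of_mem (mem_insert_of_mem hb), ?_⟩
      rw [eProd_insert_of_lt ha, ← mul_assoc, gen_mul_self, neg_one_mul, neg_one_smul]
    · obtain ⟨s, U, hU, hs⟩ := ih
      have haU : ∀ b ∈ U, a < b := fun b hb => by
        rcases mem_insert.1 (hU hb) with rfl | hb
        exacts [hai, ha b hb]
      refine ⟨-s, insert a U, fun b hb => ?_, ?_⟩
      · rcases mem_insert.1 hb with rfl | hb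
        · simp
        · rcases mem_insert.1 (hU hb) with h | h <;> simp [h]
      · rw [eProd_insert_of_lt ha, ← mul_assoc, gen_mul_gen_of_ne hai.ne', neg_mul, mul_assoc, hs,
          eProd_insert_of_lt haU, mul_smul_comm, neg_smul]

lemma span_range_eProd : Submodule.span ℝ (Set.range (eProd n)) = ⊤ := by
  refine Submodule.eq_top_iff'.2 fun x => ?_
  induction x using CliffordAlgebra.left_induction with
  | algebraMap c =>
    rw [Algebra.algebraMap_eq_smul_one, ← eProd_empty]
    exact Submodule.smul_mem _ _ (Submodule.subset_span ⟨∅, rfl⟩)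
  | add x y hx hy => exact add_mem hx hy
  | ι_mul x v hx =>
    rw [ι_eq_sum_gen, sum_mul]
    refine sum_mem fun i _ => ?_
    rw [smul_mul_assoc]
    refine Submodule.smul_mem _ _ ?_
    induction hx using Submodule.span_induction with
    | mem y hy =>
      obtain ⟨T, rfl⟩ := hy
      obtain ⟨s, U, -, hs⟩ := exists_gen_mul_eProd i T
      exact hs ▸ Submodule.smul_mem _ _ (Submodule.subset_span ⟨U, rfl⟩)
    | zero => simp
    | add y z _ _ hy hz => rw [mul_add]; exact add_mem hy hz
    | smul c y _ hy => rw [mul_smul_comm]; exact Submodule.smul_mem _ _ hy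

lemma eProd_ne_algebraMap {T : Finset (Fin n)} (hT : T.Nonempty) (c : ℝ) :
    eProd n T ≠ algebraMap ℝ (Cl n) c := by
  obtain ⟨t, ht⟩ := hT
  intro h
  have hflip : signFlip {t} (eProd n T) = -eProd n T := by
    rw [signFlip_eProd, inter_singleton_of_mem ht, card_singleton, pow_one, neg_one_smul]
  have hc : c = -c := (algebraMap ℝ (Cl n)).injective <| by
    rw [map_neg, ← h, ← hflip, h, AlgHom.commutes]
  have hsq := eProd_mul_self T
  rw [h, show c = 0 by linarith, map_zero, zero_mul, eq_comm, smul_eq_zero] at hsq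
  simp at hsq

lemma gen_pair_mul_self {i j : Fin n} (hij : i ≠ j) :
    gen n i * gen n j * (gen n i * gen n j) = -1 := by
  rw [mul_assoc, ← mul_assoc (gen n j), gen_mul_gen_of_ne hij.symm, neg_mul, mul_assoc,
    gen_mul_self]
  simp [gen_mul_self]

lemma gen_pair_mul_gen_pair {i j k : Fin n} (hij : i ≠ j) :
    gen n i * gen n j * (gen n i * gen n k) = gen n j * gen n k := by
  rw [mul_assoc, ← mul_assoc (gen n j), gen_mul_gen_of_ne hij.symm, neg_mul, mul_neg, ← mul_assoc,
    ← mul_assoc, gen_mul_self]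
  noncomm_ring

lemma gen_pair_mul_gen {i j : Fin n} (hij : i ≠ j) (k : Fin n) :
    gen n i * gen n j * gen n k = signFlip {i, j} (gen n k) * (gen n i * gen n j) := by
  rw [signFlip_gen]
  by_cases hki : k = i
  · subst hki
    simp only [mem_insert_self, if_true]
    rw [mul_assoc, gen_mul_gen_of_ne hij.symm]
    noncomm_ring
  by_cases hkj : k = j
  · subst hkj
    simp only [mem_insert, mem_singleton, hki, or_true, if_true]
    rw [mul_assoc, gen_mul_self, neg_mul, ← mul_assoc, gen_mul_gen_of_ne hij.symm, neg_mul,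
      mul_assoc, gen_mul_self]
    noncomm_ring
  simp only [mem_insert, mem_singleton, hki, hkj, or_false, if_false]
  rw [mul_assoc, gen_mul_gen_of_ne (Ne.symm hkj), mul_neg, ← mul_assoc,
    gen_mul_gen_of_ne (Ne.symm hki)]
  noncomm_ring

lemma gen_pair_mul {i j : Fin n} (hij : i ≠ j) (x : Cl n) :
    gen n i * gen n j * x = signFlip {i, j} x * (gen n i * gen n j) := by
  induction x using CliffordAlgebra.induction with
  | algebraMap c => rw [AlgHom.commutes, Algebra.commutes]
  | ι v =>
    simp only [ι_eq_sum_gen, mul_sum, sum_mul, map_sum, map_smul, mul_smul_comm, smul_mul_assoc,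
      gen_pair_mul_gen hij]
  | mul x y hx hy => rw [← mul_assoc, hx, mul_assoc, hy, map_mul, mul_assoc]
  | add x y hx hy => rw [mul_add, hx, hy, map_add, add_mul]

lemma commute_gen_pair_iff {i j : Fin n} (hij : i ≠ j) {x : Cl n} :
    Commute x (gen n i * gen n j) ↔ signFlip {i, j} x = x := by
  rw [Commute, SemiconjBy, gen_pair_mul hij]
  constructor
  · intro h
    simpa [mul_assoc, gen_pair_mul_self hij] using congrArg (· * (gen n i * gen n j)) h.symm
  · intro h
    rw [h]

lemma mem_even_iff_involute_eq {M : Type*} [AddCommGroup M] [Module ℝ M] {Q : QuadraticForm ℝ M}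
    {x : CliffordAlgebra Q} : x ∈ even Q ↔ involute x = x := by
  refine ⟨involute_eq_of_mem_even, fun h => ?_⟩
  obtain ⟨y, hy, z, hz, rfl⟩ := Submodule.mem_sup.1 ((evenOdd_isCompl Q).sup_eq_top ▸
    Submodule.mem_top (x := x))
  rw [map_add, involute_eq_of_mem_even hy, involute_eq_of_mem_odd hz, add_right_inj] at h
  have hz0 : z = 0 := by
    have : (2 : ℝ) • z = 0 := by rw [two_smul]; nth_rw 1 [← h]; exact neg_add_cancel z
    exact (smul_eq_zero.1 this).resolve_left two_ne_zero
  rwa [hz0, add_zero]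

noncomputable def signFlipInvariants (𝒜 : Finset (Finset (Fin n))) : Subalgebra ℝ (Cl n) :=
  ⨅ A ∈ 𝒜, AlgHom.equalizer (signFlip A) (AlgHom.id ℝ (Cl n))

lemma mem_signFlipInvariants {𝒜 : Finset (Finset (Fin n))} {x : Cl n} :
    x ∈ signFlipInvariants 𝒜 ↔ ∀ A ∈ 𝒜, signFlip A x = x := by
  simp [signFlipInvariants, Algebra.mem_iInf, AlgHom.mem_equalizer]

lemma eProd_mem_signFlipInvariants {𝒜 : Finset (Finset (Fin n))} {T : Finset (Fin n)}
    (hT : ∀ A ∈ 𝒜, Even #(T ∩ A)) : eProd n T ∈ signFlipInvariants 𝒜 :=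
  mem_signFlipInvariants.2 fun A hA => by rw [signFlip_eProd, (hT A hA).neg_one_pow, one_smul]

noncomputable def signFlipAverage (A : Finset (Fin n)) : Cl n →ₗ[ℝ] Cl n :=
  (2 : ℝ)⁻¹ • (LinearMap.id + (signFlip A).toLinearMap)

lemma signFlipAverage_apply (A : Finset (Fin n)) (x : Cl n) :
    signFlipAverage A x = (2 : ℝ)⁻¹ • (x + signFlip A x) := rfl

lemma signFlipAverage_of_signFlip_eq {A : Finset (Fin n)} {x : Cl n} (h : signFlip A x = x) :
    signFlipAverage A x = x := by
  rw [signFlipAverage_apply, h, ← two_smul ℝ, smul_smul, inv_mul_cancel₀ two_ne_zero, one_smul]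

lemma signFlipAverage_eProd (A T : Finset (Fin n)) :
    signFlipAverage A (eProd n T) = if Even #(T ∩ A) then eProd n T else 0 := by
  split_ifs with h
  · exact signFlipAverage_of_signFlip_eq (by rw [signFlip_eProd, h.neg_one_pow, one_smul])
  · rw [signFlipAverage_apply, signFlip_eProd, (Nat.not_even_iff_odd.1 h).neg_one_pow, neg_one_smul,
      add_neg_cancel, smul_zero]

/-- Averaging over `signFlip A` fixes its invariants and kills every `e_T` it negates, so no linear
independence of the `e_T` is needed. -/
lemma mem_span_eProd_of_mem_signFlipInvariants {𝒜 : Finset (Finset (Fin n))} {x : Cl n}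
    (hx : x ∈ signFlipInvariants 𝒜) :
    x ∈ Submodule.span ℝ (eProd n '' {T | ∀ A ∈ 𝒜, Even #(T ∩ A)}) := by
  induction 𝒜 using Finset.induction_on generalizing x with
  | empty => simp [span_range_eProd]
  | insert A 𝒜 _ ih =>
    rw [mem_signFlipInvariants, forall_mem_insert] at hx
    obtain ⟨hA, h𝒜⟩ := hx
    rw [← signFlipAverage_of_signFlip_eq hA]
    have hx := ih (mem_signFlipInvariants.2 h𝒜)
    clear hA h𝒜
    induction hx using Submodule.span_induction with
    | mem y hy =>
      obtain ⟨T, hT, rfl⟩ := hy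
      rw [signFlipAverage_eProd]
      split_ifs with h
      · exact Submodule.subset_span ⟨T, (forall_mem_insert _ _ _).2 ⟨h, hT⟩, rfl⟩
      · exact zero_mem _
    | zero => rw [map_zero]; exact zero_mem _
    | add y z _ _ hy hz => rw [map_add]; exact add_mem hy hz
    | smul c y _ hy => rw [map_smul]; exact Submodule.smul_mem _ _ hy

end SignFlip

namespace Finset

lemma subset_or_disjoint_of_forall_even_card_inter {α : Type*} [DecidableEq α]
    {W T : Finset α} (h : ∀ A ∈ W.powersetCard 2, Even #(T ∩ A)) : W ⊆ T ∨ Disjoint W T := by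
  by_contra! hc
  obtain ⟨j, hjW, hjT⟩ := not_subset.1 hc.1
  obtain ⟨i, hiW, hiT⟩ := not_disjoint_iff.1 hc.2
  have hij : i ≠ j := fun h => hjT (h ▸ hiT)
  have hinter : T ∩ {i, j} = {i} := by
    ext z
    simp only [mem_inter, mem_insert, mem_singleton]
    constructor
    · rintro ⟨hz, rfl | rfl⟩
      exacts [rfl, absurd hz hjT]
    · rintro rfl
      exact ⟨hiT, Or.inl rfl⟩
  have := h {i, j} (mem_powersetCard.2 ⟨by simp [insert_subset_iff, hiW, hjW], card_pair hij⟩)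
  rw [hinter, card_singleton] at this
  exact Nat.not_even_one this

end Finset

namespace AlgHom

variable {R A B C : Type*} [CommSemiring R] [Ring A] [Algebra R A]

lemma eq_zero_of_mul_apply_eq_zero [DivisionRing B] [Algebra R B] (φ : B →ₐ[R] A) {u : A}
    (hu : u ≠ 0) {x : B} (h : u * φ x = 0) : x = 0 := by
  by_contra hx
  refine hu ?_
  calc u = u * φ (x * x⁻¹) := by rw [mul_inv_cancel₀ hx, map_one, mul_one]
    _ = 0 := by rw [map_mul, ← mul_assoc, h, zero_mul]

variable [Semiring B] [Algebra R B] [Semiring C] [Algebra R C]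

def prodOfIdempotent (e : A) (he : IsIdempotentElem e) (φ : B →ₐ[R] A) (ψ : C →ₐ[R] A)
    (hφ : ∀ x, Commute e (φ x)) (hψ : ∀ y, Commute e (ψ y)) : B × C →ₐ[R] A :=
  AlgHom.ofLinearMap
    ((LinearMap.mulLeft R e ∘ₗ φ.toLinearMap ∘ₗ LinearMap.fst R B C) +
      (LinearMap.mulLeft R (1 - e) ∘ₗ ψ.toLinearMap ∘ₗ LinearMap.snd R B C))
    (by simp)
    (by
      rintro ⟨x, y⟩ ⟨x', y'⟩
      have he' : IsIdempotentElem (1 - e) := he.one_sub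
      have horth : e * (1 - e) = 0 := he.mul_one_sub_self
      have horth' : (1 - e) * e = 0 := he.one_sub_mul_self
      have hψ' : ∀ y, Commute (1 - e) (ψ y) := fun y => (Commute.one_left _).sub_left (hψ y)
      have hφ' : ∀ x, Commute (1 - e) (φ x) := fun x => (Commute.one_left _).sub_left (hφ x)
      simp only [LinearMap.add_apply, LinearMap.comp_apply, LinearMap.fst_apply,
        LinearMap.snd_apply, LinearMap.mulLeft_apply, AlgHom.toLinearMap_apply, Prod.fst_mul,
        Prod.snd_mul, map_mul, add_mul, mul_add]
      rw [(hφ x).symm.mul_mul_mul_comm, (hφ' x).symm.mul_mul_mul_comm,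
        (hψ y).symm.mul_mul_mul_comm, (hψ' y).symm.mul_mul_mul_comm, he.eq, he'.eq, horth,
        horth', zero_mul, zero_mul, add_zero, zero_add])

lemma prodOfIdempotent_apply (e : A) (he : IsIdempotentElem e) (φ : B →ₐ[R] A) (ψ : C →ₐ[R] A)
    (hφ : ∀ x, Commute e (φ x)) (hψ : ∀ y, Commute e (ψ y)) (z : B × C) :
    prodOfIdempotent e he φ ψ hφ hψ z = e * φ z.1 + (1 - e) * ψ z.2 := rfl

lemma prodOfIdempotent_injective {B C : Type*} [DivisionRing B] [Algebra R B] [DivisionRing C]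
    [Algebra R C] {e : A} (he : IsIdempotentElem e) (he0 : e ≠ 0) (he1 : e ≠ 1)
    (φ : B →ₐ[R] A) (ψ : C →ₐ[R] A) (hφ : ∀ x, Commute e (φ x)) (hψ : ∀ y, Commute e (ψ y)) :
    Function.Injective (prodOfIdempotent e he φ ψ hφ hψ) := by
  refine (injective_iff_map_eq_zero _).2 fun ⟨x, y⟩ h => ?_
  rw [prodOfIdempotent_apply] at h
  have hx : e * φ x = 0 := by
    simpa [mul_add, ← mul_assoc, he.eq, he.mul_one_sub_self] using congrArg (e * ·) h
  have hy : (1 - e) * ψ y = 0 := by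
    simpa [mul_add, ← mul_assoc, he.one_sub.eq, he.one_sub_mul_self] using
      congrArg ((1 - e) * ·) h
  rw [eq_zero_of_mul_apply_eq_zero φ he0 hx,
    eq_zero_of_mul_apply_eq_zero ψ (sub_ne_zero.2 he1.symm) hy]
  rfl

end AlgHom

namespace SpinCentralizer

open CliffordAlgebra Finset

variable (r : ℕ)

def lowIdx : Finset (Fin (r + 3)) := univ.filter fun i => (i : ℕ) < r

-- `idx₁, idx₂, idx₃` index the generators `e_{r+1}, e_{r+2}, e_{r+3}` (indices start at `0`).
def idx₁ : Fin (r + 3) := Fin.natAdd r 0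
def idx₂ : Fin (r + 3) := Fin.natAdd r 1
def idx₃ : Fin (r + 3) := Fin.natAdd r 2

@[simp] lemma val_idx₁ : (idx₁ r : ℕ) = r := rfl
@[simp] lemma val_idx₂ : (idx₂ r : ℕ) = r + 1 := rfl
@[simp] lemma val_idx₃ : (idx₃ r : ℕ) = r + 2 := rfl

noncomputable def vol : Cl (r + 3) := eProd (r + 3) (lowIdx r)

noncomputable def quatI : Cl (r + 3) := gen (r + 3) (idx₁ r) * gen (r + 3) (idx₂ r)
noncomputable def quatJ : Cl (r + 3) := gen (r + 3) (idx₁ r) * gen (r + 3) (idx₃ r)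
noncomputable def quatK : Cl (r + 3) := gen (r + 3) (idx₂ r) * gen (r + 3) (idx₃ r)

noncomputable def projPlus : Cl (r + 3) := (2 : ℝ)⁻¹ • (1 + vol r)
noncomputable def projMinus : Cl (r + 3) := (2 : ℝ)⁻¹ • (1 - vol r)

def flipSets : Finset (Finset (Fin (r + 3))) := insert univ ((lowIdx r).powersetCard 2)

lemma mem_lowIdx {i : Fin (r + 3)} : i ∈ lowIdx r ↔ (i : ℕ) < r := by
  simp [lowIdx]

lemma card_lowIdx : #(lowIdx r) = r := by
  have : lowIdx r = Iio (idx₁ r) := by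
    ext i
    simp [lowIdx, Fin.lt_def]
  rw [this, Fin.card_Iio]
  rfl

lemma idx₁_lt_idx₂ : idx₁ r < idx₂ r := by simp [Fin.lt_def]
lemma idx₁_lt_idx₃ : idx₁ r < idx₃ r := by simp [Fin.lt_def]
lemma idx₂_lt_idx₃ : idx₂ r < idx₃ r := by simp [Fin.lt_def]

lemma even_choose_two_of_mod_eight (hr : r % 8 = 4) : Even ((r + 1).choose 2) := by
  obtain ⟨m, rfl⟩ : ∃ m, r = 8 * m + 4 := ⟨r / 8, by omega⟩
  have hprod : (8 * m + 4 + 1) * (8 * m + 4 + 1 - 1) = 2 * ((8 * m + 5) * (4 * m + 2)) := by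
    rw [Nat.add_sub_cancel]; ring
  rw [Nat.choose_two_right, hprod, Nat.mul_div_cancel_left _ two_pos]
  exact Nat.even_mul.2 (Or.inr ⟨2 * m + 1, by ring⟩)

lemma vol_mul_self (hr : r % 8 = 4) : vol r * vol r = 1 := by
  rw [vol, eProd_mul_self, card_lowIdx, (even_choose_two_of_mod_eight r hr).neg_one_pow, one_smul]

lemma vol_ne_algebraMap (hr : 0 < r) (c : ℝ) : vol r ≠ algebraMap ℝ (Cl (r + 3)) c :=
  eProd_ne_algebraMap ⟨⟨0, by omega⟩, (mem_lowIdx r).2 hr⟩ c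

lemma isIdempotentElem_projPlus (hr : r % 8 = 4) : IsIdempotentElem (projPlus r) := by
  rw [IsIdempotentElem, projPlus, smul_mul_smul_comm, add_mul, mul_add, mul_add, vol_mul_self r hr]
  simp only [one_mul, mul_one]
  module

lemma projPlus_ne_zero (hr : 0 < r) : projPlus r ≠ 0 := by
  refine fun h => vol_ne_algebraMap r hr (-1) ?_
  have h' : 1 + vol r = 0 := by
    rwa [projPlus, smul_eq_zero_iff_right (inv_ne_zero two_ne_zero)] at h
  rw [map_neg, map_one, eq_neg_of_add_eq_zero_right h']

lemma projPlus_ne_one (hr : 0 < r) : projPlus r ≠ 1 := by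
  refine fun h => vol_ne_algebraMap r hr 1 ?_
  rwa [map_one, ← add_right_inj 1, ← two_smul ℝ, ← inv_smul_eq_iff₀ two_ne_zero]

lemma projMinus_eq : projMinus r = 1 - projPlus r := by
  rw [projMinus, projPlus]
  module

lemma mem_signFlipInvariants_flipSets_iff {x : Cl (r + 3)} :
    x ∈ signFlipInvariants (flipSets r) ↔ x ∈ CliffordAlgebra.even (Qneg (r + 3)) ∧
      ∀ i j : Fin (r + 3), (i : ℕ) < r → (j : ℕ) < r → i < j →
        Commute x (gen (r + 3) i * gen (r + 3) j) := by
  rw [mem_signFlipInvariants, flipSets, forall_mem_insert, signFlip_univ,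
    ← mem_even_iff_involute_eq]
  refine and_congr_right fun _ => ⟨fun h i j hi hj hij => ?_, fun h A hA => ?_⟩
  · refine (commute_gen_pair_iff hij.ne).2 (h _ (mem_powersetCard.2 ⟨?_, card_pair hij.ne⟩))
    simp [insert_subset_iff, mem_lowIdx, hi, hj]
  · obtain ⟨hAW, hA2⟩ := mem_powersetCard.1 hA
    obtain ⟨i, j, hij, rfl⟩ := card_eq_two.1 hA2
    have hi := (mem_lowIdx r).1 (hAW (mem_insert_self i {j}))
    have hj := (mem_lowIdx r).1 (hAW (mem_insert_of_mem (mem_singleton_self j)))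
    rcases hij.lt_or_gt with hij | hij
    · exact (commute_gen_pair_iff hij.ne).1 (h i j hi hj hij)
    · rw [pair_comm]
      exact (commute_gen_pair_iff hij.ne).1 (h j i hj hi hij)

lemma vol_mem_signFlipInvariants (hr : Even r) : vol r ∈ signFlipInvariants (flipSets r) := by
  refine eProd_mem_signFlipInvariants ?_
  simp only [flipSets, forall_mem_insert, inter_univ, card_lowIdx, mem_powersetCard]
  refine ⟨hr, fun A ⟨hAW, hA2⟩ => ?_⟩
  rw [inter_eq_right.2 hAW, hA2]
  exact even_two

lemma disjoint_lowIdx_pair {i j : Fin (r + 3)} (hi : r ≤ (i : ℕ)) (hj : r ≤ (j : ℕ)) :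
    Disjoint (lowIdx r) {i, j} := by
  refine disjoint_left.2 fun k hk hkij => ?_
  rw [mem_lowIdx] at hk
  rcases mem_insert.1 hkij with rfl | hkj
  · omega
  · rw [mem_singleton.1 hkj] at hk; omega

lemma gen_pair_mem_signFlipInvariants {i j : Fin (r + 3)} (hij : i < j) (hi : r ≤ (i : ℕ))
    (hj : r ≤ (j : ℕ)) : gen (r + 3) i * gen (r + 3) j ∈ signFlipInvariants (flipSets r) := by
  rw [← eProd_pair hij]
  refine eProd_mem_signFlipInvariants ?_
  simp only [flipSets, forall_mem_insert, inter_univ, card_pair hij.ne, even_two, true_and,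
    mem_powersetCard]
  rintro A ⟨hAW, -⟩
  rw [disjoint_iff_inter_eq_empty.1 ((disjoint_lowIdx_pair r hi hj).symm.mono_right hAW),
    card_empty]
  exact ⟨0, rfl⟩

lemma commute_vol_gen_pair {i j : Fin (r + 3)} (hij : i ≠ j) (hi : r ≤ (i : ℕ))
    (hj : r ≤ (j : ℕ)) : Commute (vol r) (gen (r + 3) i * gen (r + 3) j) := by
  rw [commute_gen_pair_iff hij, vol, signFlip_eProd,
    disjoint_iff_inter_eq_empty.1 (disjoint_lowIdx_pair r hi hj), card_empty, pow_zero, one_smul]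

noncomputable def quatBasis : QuaternionAlgebra.Basis (Cl (r + 3)) (-1 : ℝ) 0 (-1) where
  i := quatI r
  j := quatJ r
  k := quatK r
  i_mul_i := by rw [quatI, gen_pair_mul_self (idx₁_lt_idx₂ r).ne]; simp
  j_mul_j := by rw [quatJ, gen_pair_mul_self (idx₁_lt_idx₃ r).ne]; simp
  i_mul_j := gen_pair_mul_gen_pair (idx₁_lt_idx₂ r).ne
  j_mul_i := by
    rw [quatJ, quatI, quatK, gen_pair_mul_gen_pair (idx₁_lt_idx₃ r).ne,
      gen_mul_gen_of_ne (idx₂_lt_idx₃ r).ne']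
    simp

noncomputable def quatHom : Quaternion ℝ →ₐ[ℝ] Cl (r + 3) := (quatBasis r).liftHom

lemma quatHom_apply (x : Quaternion ℝ) :
    quatHom r x = algebraMap ℝ _ x.re + x.imI • quatI r + x.imJ • quatJ r + x.imK • quatK r := rfl

lemma quatHom_mem {M : Submodule ℝ (Cl (r + 3))} (h1 : 1 ∈ M) (hI : quatI r ∈ M) (hJ : quatJ r ∈ M)
    (hK : quatK r ∈ M) (x : Quaternion ℝ) : quatHom r x ∈ M := by
  rw [quatHom_apply, Algebra.algebraMap_eq_smul_one]
  exact add_mem (add_mem (add_mem (M.smul_mem _ h1) (M.smul_mem _ hI)) (M.smul_mem _ hJ))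
    (M.smul_mem _ hK)

lemma mul_quatHom_mem {M : Submodule ℝ (Cl (r + 3))} {e : Cl (r + 3)} (h1 : e ∈ M)
    (hI : e * quatI r ∈ M) (hJ : e * quatJ r ∈ M) (hK : e * quatK r ∈ M) (x : Quaternion ℝ) :
    e * quatHom r x ∈ M :=
  quatHom_mem r (M := M.comap (LinearMap.mulLeft ℝ e)) (by simpa using h1) hI hJ hK x

lemma quatI_mem_range : quatI r ∈ (quatHom r).range :=
  ⟨(⟨0, 1, 0, 0⟩ : Quaternion ℝ), (quatHom_apply r _).trans (by simp)⟩
lemma quatJ_mem_range : quatJ r ∈ (quatHom r).range :=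
  ⟨(⟨0, 0, 1, 0⟩ : Quaternion ℝ), (quatHom_apply r _).trans (by simp)⟩
lemma quatK_mem_range : quatK r ∈ (quatHom r).range :=
  ⟨(⟨0, 0, 0, 1⟩ : Quaternion ℝ), (quatHom_apply r _).trans (by simp)⟩

lemma eProd_mem_range_quatHom {U : Finset (Fin (r + 3))} (hU : ∀ i ∈ U, r ≤ (i : ℕ))
    (hU2 : Even #U) : eProd (r + 3) U ∈ (quatHom r).range := by
  have hU' : U = ({idx₁ r, idx₂ r, idx₃ r} : Finset _).filter (· ∈ U) := by
    ext i
    simp only [mem_filter, mem_insert, mem_singleton, iff_and_self]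
    intro hi
    have := hU i hi
    have := i.isLt
    simp only [Fin.ext_iff, val_idx₁, val_idx₂, val_idx₃]
    omega
  by_cases h1 : idx₁ r ∈ U <;> by_cases h2 : idx₂ r ∈ U <;> by_cases h3 : idx₃ r ∈ U <;>
    rw [hU'] at hU2 ⊢ <;>
    simp only [filter_insert, filter_singleton, h1, h2, h3, if_true, if_false, insert_empty]
      at hU2 ⊢ <;>
    simp [(idx₁_lt_idx₂ r).ne, (idx₁_lt_idx₃ r).ne, (idx₂_lt_idx₃ r).ne, Nat.even_iff] at hU2
  · rw [eProd_pair (idx₁_lt_idx₂ r)]; exact quatI_mem_range r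
  · rw [eProd_pair (idx₁_lt_idx₃ r)]; exact quatJ_mem_range r
  · rw [eProd_pair (idx₂_lt_idx₃ r)]; exact quatK_mem_range r
  · rw [eProd_empty]; exact one_mem _

lemma commute_projPlus_quatHom (x : Quaternion ℝ) : Commute (projPlus r) (quatHom r x) := by
  have hvol : quatHom r x ∈ Subalgebra.toSubmodule (Subalgebra.centralizer ℝ {vol r}) := by
    refine quatHom_mem r (Subalgebra.one_mem _) ?_ ?_ ?_ x <;>
      simp only [Subalgebra.mem_toSubmodule, Subalgebra.mem_centralizer_iff, Set.mem_singleton_iff,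
        forall_eq]
    · exact (commute_vol_gen_pair r (idx₁_lt_idx₂ r).ne le_rfl (by simp)).eq
    · exact (commute_vol_gen_pair r (idx₁_lt_idx₃ r).ne le_rfl (by simp)).eq
    · exact (commute_vol_gen_pair r (idx₂_lt_idx₃ r).ne (by simp) (by simp)).eq
  rw [Subalgebra.mem_toSubmodule, Subalgebra.mem_centralizer_iff] at hvol
  exact ((Commute.one_left _).add_left (hvol (vol r) rfl)).smul_left (2 : ℝ)⁻¹

variable (hr : r % 8 = 4)

noncomputable def quaternionPair : (Quaternion ℝ × Quaternion ℝ) →ₐ[ℝ] Cl (r + 3) :=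
  AlgHom.prodOfIdempotent (projPlus r) (isIdempotentElem_projPlus r hr) (quatHom r) (quatHom r)
    (commute_projPlus_quatHom r) (commute_projPlus_quatHom r)

lemma quaternionPair_apply (z : Quaternion ℝ × Quaternion ℝ) :
    quaternionPair r hr z = projPlus r * quatHom r z.1 + projMinus r * quatHom r z.2 := by
  rw [projMinus_eq]
  rfl

lemma quaternionPair_injective : Function.Injective (quaternionPair r hr) :=
  AlgHom.prodOfIdempotent_injective _ (projPlus_ne_zero r (by omega)) (projPlus_ne_one r (by omega))
    _ _ _ _

lemma range_quatHom_le : (quatHom r).range ≤ (quaternionPair r hr).range := by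
  rintro _ ⟨x, rfl⟩
  refine (AlgHom.mem_range _).2 ⟨(x, x), ?_⟩
  rw [quaternionPair_apply, ← add_mul, projMinus_eq, add_sub_cancel, one_mul]
  rfl

lemma projPlus_mem_range : projPlus r ∈ (quaternionPair r hr).range :=
  (AlgHom.mem_range _).2
    ⟨(1, 0), by rw [quaternionPair_apply, map_one, map_zero, mul_one, mul_zero, add_zero]⟩

lemma projMinus_mem_range : projMinus r ∈ (quaternionPair r hr).range :=
  (AlgHom.mem_range _).2
    ⟨(0, 1), by rw [quaternionPair_apply, map_one, map_zero, mul_one, mul_zero, zero_add]⟩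

lemma toSubmodule_range_quaternionPair :
    Subalgebra.toSubmodule (quaternionPair r hr).range = Submodule.span ℝ
      {projPlus r, projMinus r, projPlus r * quatI r, projMinus r * quatI r,
        projPlus r * quatJ r, projMinus r * quatJ r, projPlus r * quatK r,
        projMinus r * quatK r} := by
  refine le_antisymm (fun x hx => ?_) (Submodule.span_le.2 ?_)
  · obtain ⟨z, rfl⟩ := (AlgHom.mem_range _).1 hx
    rw [quaternionPair_apply]
    refine add_mem (mul_quatHom_mem r ?_ ?_ ?_ ?_ _) (mul_quatHom_mem r ?_ ?_ ?_ ?_ _) <;>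
      exact Submodule.subset_span (by simp)
  · have hp := projPlus_mem_range r hr
    have hq := projMinus_mem_range r hr
    have hI := range_quatHom_le r hr (quatI_mem_range r)
    have hJ := range_quatHom_le r hr (quatJ_mem_range r)
    have hK := range_quatHom_le r hr (quatK_mem_range r)
    simp only [Set.insert_subset_iff, Set.singleton_subset_iff, Subalgebra.coe_toSubmodule,
      SetLike.mem_coe]
    exact ⟨hp, hq, mul_mem hp hI, mul_mem hq hI, mul_mem hp hJ, mul_mem hq hJ, mul_mem hp hK,
      mul_mem hq hK⟩

lemma vol_mem_range : vol r ∈ (quaternionPair r hr).range := by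
  have : vol r = projPlus r - projMinus r := by rw [projPlus, projMinus]; module
  rw [this]
  exact sub_mem (projPlus_mem_range r hr) (projMinus_mem_range r hr)

lemma eProd_mem_range {T : Finset (Fin (r + 3))} (hT : ∀ A ∈ flipSets r, Even #(T ∩ A)) :
    eProd (r + 3) T ∈ (quaternionPair r hr).range := by
  rw [flipSets, forall_mem_insert, inter_univ] at hT
  obtain ⟨hTeven, hpairs⟩ := hT
  have hlow : T ∩ lowIdx r = lowIdx r ∨ T ∩ lowIdx r = ∅ :=
    (subset_or_disjoint_of_forall_even_card_inter hpairs).imp inter_eq_right.2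
      fun h => disjoint_iff_inter_eq_empty.1 h.symm
  have hsplit : eProd (r + 3) T = eProd (r + 3) (T ∩ lowIdx r) * eProd (r + 3) (T \ lowIdx r) := by
    rw [← eProd_union_of_lt, union_comm, sdiff_union_inter]
    intro x hx y hy
    rw [mem_inter, mem_lowIdx] at hx
    rw [mem_sdiff, mem_lowIdx] at hy
    exact Fin.lt_def.2 (by omega)
  have hhigh : Even #(T \ lowIdx r) := by
    have hcard := card_inter_add_card_sdiff T (lowIdx r)
    rw [Nat.even_iff] at hTeven ⊢
    rcases hlow with h | h <;> rw [h] at hcard <;> simp only [card_lowIdx, card_empty] at hcard <;>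
      omega
  rw [hsplit]
  refine mul_mem ?_ (range_quatHom_le r hr (eProd_mem_range_quatHom r (fun i hi => ?_) hhigh))
  · rcases hlow with h | h
    · rw [h]; exact vol_mem_range r hr
    · rw [h, eProd_empty]; exact one_mem _
  · have := (mem_sdiff.1 hi).2
    rw [mem_lowIdx] at this
    omega

lemma signFlipInvariants_flipSets_eq_range :
    signFlipInvariants (flipSets r) = (quaternionPair r hr).range := by
  refine le_antisymm (fun x hx => ?_) fun x hx => ?_
  · refine (Submodule.span_le (p := Subalgebra.toSubmodule (quaternionPair r hr).range)).2 ?_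
      (mem_span_eProd_of_mem_signFlipInvariants hx)
    rintro _ ⟨T, hT, rfl⟩
    exact eProd_mem_range r hr hT
  · obtain ⟨z, rfl⟩ := (AlgHom.mem_range _).1 hx
    have hvol := vol_mem_signFlipInvariants r ⟨r / 2, by omega⟩
    have hquat (y : Quaternion ℝ) : quatHom r y ∈ signFlipInvariants (flipSets r) :=
      quatHom_mem r (M := Subalgebra.toSubmodule (signFlipInvariants (flipSets r)))
        (Subalgebra.one_mem _)
        (gen_pair_mem_signFlipInvariants r (idx₁_lt_idx₂ r) le_rfl (by simp))
        (gen_pair_mem_signFlipInvariants r (idx₁_lt_idx₃ r) le_rfl (by simp))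
        (gen_pair_mem_signFlipInvariants r (idx₂_lt_idx₃ r) (by simp) (by simp)) y
    rw [quaternionPair_apply, projPlus, projMinus]
    exact add_mem (mul_mem (Subalgebra.smul_mem _ (add_mem (one_mem _) hvol) _) (hquat _))
      (mul_mem (Subalgebra.smul_mem _ (sub_mem (one_mem _) hvol) _) (hquat _))

end SpinCentralizer

/-- For `r ≡ 4 (mod 8)`, the centralizer of `spin(r)` in the even Clifford algebra
`Cl_{r+3}⁰` is the 8-dimensional span of `(1 ± ω)/2`, `(1 ± ω)/2·e_{r+1}e_{r+2}`,
`(1 ± ω)/2·e_{r+1}e_{r+3}` and `(1 ± ω)/2·e_{r+2}e_{r+3}` (with `ω = e₁⋯e_r`), and this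
algebra is isomorphic to `ℍ ⊕ ℍ`. -/
theorem stmt8 (r : ℕ) (hr : r % 8 = 4) :
    let n := r + 3
    let ω : Cl n := eProd n (Finset.univ.filter fun i => (i : ℕ) < r)
    let p : Cl n := (2 : ℝ)⁻¹ • (1 + ω)
    let q : Cl n := (2 : ℝ)⁻¹ • (1 - ω)
    let a : Cl n := gen n ⟨r, by omega⟩ * gen n ⟨r + 1, by omega⟩
    let b : Cl n := gen n ⟨r, by omega⟩ * gen n ⟨r + 2, by omega⟩
    let c : Cl n := gen n ⟨r + 1, by omega⟩ * gen n ⟨r + 2, by omega⟩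
    let S : Set (Cl n) := {p, q, p * a, q * a, p * b, q * b, p * c, q * c}
    ({x : Cl n | x ∈ CliffordAlgebra.even (Qneg n) ∧
        ∀ i j : Fin n, (i : ℕ) < r → (j : ℕ) < r → i < j →
          Commute x (gen n i * gen n j)} =
      (Submodule.span ℝ S : Set (Cl n))) ∧
    ∃ f : (Quaternion ℝ × Quaternion ℝ) →ₐ[ℝ] Cl n, Function.Injective f ∧
      Set.range f = (Submodule.span ℝ S : Set (Cl n)) := by
  intro n ω p q a b c S
  have hrange :
      Set.range (SpinCentralizer.quaternionPair r hr) = (Submodule.span ℝ S : Set (Cl n)) := by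
    rw [← AlgHom.coe_range, ← Subalgebra.coe_toSubmodule,
      SpinCentralizer.toSubmodule_range_quaternionPair]
    rfl
  refine ⟨?_, SpinCentralizer.quaternionPair r hr, SpinCentralizer.quaternionPair_injective r hr,
    hrange⟩
  rw [← hrange, ← AlgHom.coe_range, ← SpinCentralizer.signFlipInvariants_flipSets_eq_range r hr]
  ext x
  exact (SpinCentralizer.mem_signFlipInvariants_flipSets_iff r).symm
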